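/- arXiv:math/0508272 — 2 statements merged into one kernel-verified Lean document; each statement's English description precedes it below -/
import Mathlib

section
/- Let 𝔠 be an S-closed C-extending sequence, β ∈ C, w ⊆ β with w ∪ {min(C \ sup(w))} S-closed. Then pos_S(w, 𝔠, β) is nonempty and pos_S(w, 𝔠, β) ⊆ pos⁺_S(w, 𝔠, β). -/
open Set

noncomputable section

universe u

/-- `c` is an `(α,β)`-extending function: it maps subsets of `α` (coded as subsets of
`Set.Iio α`) to subsets of `β` that are not subsets of `α`, with `c u ∩ α = u`. -/
def ExtFun (α β : Ordinal.{u}) (c : Set Ordinal.{u} → Set Ordinal.{u}) : Prop :=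
  ∀ u, u ⊆ Set.Iio α → c u ⊆ Set.Iio β ∧ ¬ c u ⊆ Set.Iio α ∧ c u ∩ Set.Iio α = u

/-- The next element of `C` above `α`. -/
def nextC (C : Set Ordinal.{u}) (α : Ordinal.{u}) : Ordinal.{u} := sInf (C ∩ Set.Ioi α)

/-- The least element of `C` above all elements of `w`. -/
def firstAbove (C : Set Ordinal.{u}) (w : Set Ordinal.{u}) : Ordinal.{u} :=
  sInf {α ∈ C | w ⊆ Set.Iio α}

/-- The least element of `C` which is `≥ sup w`. -/
def minAboveSup (C : Set Ordinal.{u}) (w : Set Ordinal.{u}) : Ordinal.{u} :=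
  sInf (C \ Set.Iio (sSup w))

/-- `C` is an unbounded subset of (the ordinals below) `lam`. -/
def UnbIn (lam : Ordinal.{u}) (C : Set Ordinal.{u}) : Prop :=
  C ⊆ Set.Iio lam ∧ ∀ α < lam, ∃ β ∈ C, α < β

/-- `C` is a club (closed and unbounded) subset of `lam`. -/
def IsClubIn (lam : Ordinal.{u}) (C : Set Ordinal.{u}) : Prop :=
  UnbIn lam C ∧
    ∀ ξ < lam, (C ∩ Set.Iio ξ).Nonempty → ξ = sSup (C ∩ Set.Iio ξ) → ξ ∈ C

/-- `S` is a stationary subset of `lam`. -/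
def StatIn (lam : Ordinal.{u}) (S : Set Ordinal.{u}) : Prop :=
  S ⊆ Set.Iio lam ∧ ∀ C, IsClubIn lam C → (S ∩ C).Nonempty

/-- `𝔠 = ⟨c α : α ∈ C⟩` is a `C`-extending sequence. -/
def CextSeq (lam : Ordinal.{u}) (C : Set Ordinal.{u})
    (c : Ordinal.{u} → Set Ordinal.{u} → Set Ordinal.{u}) : Prop :=
  UnbIn lam C ∧ ∀ α ∈ C, ExtFun α (nextC C α) (c α)

/-- `pos⁺(w, 𝔠, β)`. -/
def posPlus (C : Set Ordinal.{u}) (c : Ordinal.{u} → Set Ordinal.{u} → Set Ordinal.{u})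
    (w : Set Ordinal.{u}) (β : Ordinal.{u}) : Set (Set Ordinal.{u}) :=
  {u | u ⊆ Set.Iio β ∧
    u ∩ Set.Iio (firstAbove C w) = w ∧
    (∀ α₀ ∈ C, w ⊆ Set.Iio α₀ → (C ∩ Set.Ioi α₀).Nonempty → nextC C α₀ ≤ β →
      (c α₀ (u ∩ Set.Iio α₀) = u ∩ Set.Iio (nextC C α₀) ∨
        u ∩ Set.Iio α₀ = u ∩ Set.Iio (nextC C α₀))) ∧
    (∀ α₀, sSup w < α₀ → α₀ ∉ C → (C ∩ Set.Iio α₀).Nonempty →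
      α₀ = sSup (C ∩ Set.Iio α₀) → (C ∩ Set.Ioi α₀).Nonempty → nextC C α₀ ≤ β →
      u ∩ Set.Iio (nextC C α₀) = u ∩ Set.Iio α₀)}

/-- `pos(w, 𝔠, β)`. -/
def pos (C : Set Ordinal.{u}) (c : Ordinal.{u} → Set Ordinal.{u} → Set Ordinal.{u})
    (w : Set Ordinal.{u}) (β : Ordinal.{u}) : Set (Set Ordinal.{u}) :=
  {u ∈ posPlus C c w β |
    firstAbove C w ≤ β → nextC C (firstAbove C w) ≤ β →
      u ∩ Set.Iio (nextC C (firstAbove C w)) = c (firstAbove C w) w}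

/-- `w` is an `S`-closed set: limits of `w` lying in `S` belong to `w`. -/
def SClosed (S w : Set Ordinal.{u}) : Prop :=
  ∀ ξ, (w ∩ Set.Iio ξ).Nonempty → ξ = sSup (w ∩ Set.Iio ξ) → ξ ∈ S → ξ ∈ w

/-- `𝔠` is an `S`-closed `C`-extending sequence. -/
def SClosedSeq (lam : Ordinal.{u}) (S C : Set Ordinal.{u})
    (c : Ordinal.{u} → Set Ordinal.{u} → Set Ordinal.{u}) : Prop :=
  IsClubIn lam C ∧ CextSeq lam C c ∧
  (∀ α ∈ C, ∀ u, u ⊆ Set.Iio α → α ∈ c α u) ∧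
  (∀ ξ ∈ S, ξ ∉ C → ∀ α ∈ C ∩ Set.Iio ξ, ∀ u, u ⊆ Set.Iio α →
    ξ = sSup (c α u ∩ Set.Iio ξ) → ξ ∈ c α u)

/-- `pos⁺_S(w, 𝔠, β)`. -/
def posPlusS (S C : Set Ordinal.{u}) (c : Ordinal.{u} → Set Ordinal.{u} → Set Ordinal.{u})
    (w : Set Ordinal.{u}) (β : Ordinal.{u}) : Set (Set Ordinal.{u}) :=
  {u ∈ posPlus C c w β | SClosed S (u ∪ {β})}

/-- `pos_S(w, 𝔠, β)`. -/
def posS (S C : Set Ordinal.{u}) (c : Ordinal.{u} → Set Ordinal.{u} → Set Ordinal.{u})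
    (w : Set Ordinal.{u}) (β : Ordinal.{u}) : Set (Set Ordinal.{u}) :=
  {u ∈ pos C c w β | SClosed S (u ∪ {β})}

/-- A condition in the forcing notion `Q¹_S`: a triple `(w, C, 𝔠)` where `C` is a club of
`lam`, `w ⊆ min C` with `w ∪ {min C}` `S`-closed, and `𝔠` is an `S`-closed `C`-extending
sequence (normalized to be `∅` outside its natural domain). -/
structure Q1S (lam : Ordinal.{u}) (S : Set Ordinal.{u}) where
  w : Set Ordinal.{u}
  C : Set Ordinal.{u}
  c : Ordinal.{u} → Set Ordinal.{u} → Set Ordinal.{u}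
  seq : SClosedSeq lam S C c
  w_sub : w ⊆ Set.Iio (sInf C)
  w_cl : SClosed S (w ∪ {sInf C})
  norm : ∀ α u, (α ∉ C ∨ ¬ u ⊆ Set.Iio α) → c α u = ∅

/-- The order of `Q¹_S`. -/
def Q1Sle (lam : Ordinal.{u}) (S : Set Ordinal.{u}) (p q : Q1S lam S) : Prop :=
  q.C ⊆ p.C ∧ q.w ∈ posPlusS S p.C p.c p.w (sInf q.C) ∧
  ∀ α₀ ∈ q.C, (q.C ∩ Set.Ioi α₀).Nonempty →
    ∀ u ∈ posPlusS S q.C q.c q.w α₀,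
      q.c α₀ u ∈ posS S p.C p.c u (nextC q.C α₀)

open scoped Classical in
/-- Restriction of an extending sequence to a smaller domain `C` (normalized). -/
def restC (C : Set Ordinal.{u}) (c : Ordinal.{u} → Set Ordinal.{u} → Set Ordinal.{u}) :
    Ordinal.{u} → Set Ordinal.{u} → Set Ordinal.{u} :=
  fun α u => if α ∈ C ∧ u ⊆ Set.Iio α then c α u else ∅

/-- `q` is the condition `p↾_α u = (u, C^p \ α, 𝔠^p ↾ (C^p \ α))`. -/
def IsRestrictedCond (lam : Ordinal.{u}) (S : Set Ordinal.{u}) (p : Q1S lam S)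
    (α : Ordinal.{u}) (u : Set Ordinal.{u}) (q : Q1S lam S) : Prop :=
  q.w = u ∧ q.C = p.C ∩ Set.Ici α ∧ q.c = restC (p.C ∩ Set.Ici α) p.c

/-- The order type of a set of ordinals. -/
def otp (s : Set Ordinal.{u}) : Ordinal.{u + 1} := Ordinal.type (Subrel ((· < ·) : Ordinal.{u} → Ordinal.{u} → Prop) (· ∈ s))

open scoped Classical in
/-- The extending sequence of the natural limit of an increasing sequence
`⟨p ξ : ξ < γ⟩` of conditions in `Q¹_S`. -/
def natLimitC (lam : Ordinal.{u}) (S : Set Ordinal.{u}) (γ : Ordinal.{u})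
    (p : Ordinal.{u} → Q1S lam S) : Ordinal.{u} → Set Ordinal.{u} → Set Ordinal.{u} :=
  fun δ u =>
    if δ ∈ ⋂ ξ ∈ Set.Iio γ, (p ξ).C then
      if u ⊆ Set.Iio δ then
        if ∀ ξ < γ, u ∈ posPlusS S (p ξ).C (p ξ).c (p ξ).w δ then
          ⋃ ξ ∈ Set.Iio γ, (p ξ).c δ u
        else u ∪ {δ}
      else ∅
    else ∅

/-- `G` is a filter on the forcing notion `Q¹_S`. -/
def QFilter (lam : Ordinal.{u}) (S : Set Ordinal.{u}) (G : Set (Q1S lam S)) : Prop :=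
  G.Nonempty ∧ (∀ p ∈ G, ∀ q, Q1Sle lam S q p → q ∈ G) ∧
    ∀ p ∈ G, ∀ q ∈ G, ∃ r ∈ G, Q1Sle lam S p r ∧ Q1Sle lam S q r

/-- `G` is a generic filter on `Q¹_S`: a filter meeting every dense set. -/
def QGeneric (lam : Ordinal.{u}) (S : Set Ordinal.{u}) (G : Set (Q1S lam S)) : Prop :=
  QFilter lam S G ∧ ∀ D : Set (Q1S lam S),
    (∀ p, ∃ q ∈ D, Q1Sle lam S p q) → (D ∩ G).Nonempty

section Game
variable {Q : Type*}

/-- `f` codes a legal partial play of `⅁₀^λ(Q, r)` of length `i` in which Complete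
follows the strategy `σ`. -/
def IsPartialPlay (le : Q → Q → Prop) (r : Q)
    (σ : (Ordinal.{u} → Q × Q) → Ordinal.{u} → Q → Q) (i : Ordinal.{u})
    (f : Ordinal.{u} → Q × Q) : Prop :=
  ∀ j < i, le r (f j).1 ∧ (∀ k < j, le (f k).2 (f j).1) ∧
    le (f j).1 (f j).2 ∧ (f j).2 = σ f j (f j).1

/-- `σ` is a winning strategy for Complete in `⅁₀^λ(Q, r)`: it depends only on the
history, Incomplete always has a legal move, and `σ` answers any legal move legally. -/
def WinningStrat (le : Q → Q → Prop) (lam : Ordinal.{u}) (r : Q)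
    (σ : (Ordinal.{u} → Q × Q) → Ordinal.{u} → Q → Q) : Prop :=
  (∀ f g i p, (∀ j < i, f j = g j) → σ f i p = σ g i p) ∧
  ∀ i < lam, ∀ f, IsPartialPlay le r σ i f →
    (∃ p, le r p ∧ ∀ j < i, le (f j).2 p) ∧
    (∀ p, le r p → (∀ j < i, le (f j).2 p) → le p (σ f i p))

/-- `Q` is strategically `(<λ)`-complete. -/
def StratComplete (Q : Type*) (le : Q → Q → Prop) (lam : Ordinal.{u}) : Prop :=
  ∀ r : Q, ∃ σ, WinningStrat le lam r σ

end Game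

/-- A family `Fam ⊆ β^β` is `F`-dominating. -/
def Dominating {β : Type*} [LT β] (F : Set (Set β)) (Fam : Set (β → β)) : Prop :=
  ∀ g : β → β, ∃ f ∈ Fam, {a | g a < f a} ∈ F

/-- The `F`-dominating number `𝔡_F`. -/
def domNum {β : Type*} [LT β] (F : Set (Set β)) : Cardinal :=
  sInf {c | ∃ Fam : Set (β → β), Dominating F Fam ∧ c = Cardinal.mk Fam}

/-- `U` is a (proper) filter on (the ordinals below) `lam`. -/
def FilterOn (lam : Ordinal.{u}) (U : Set (Set Ordinal.{u})) : Prop :=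
  (∀ A ∈ U, A ⊆ Set.Iio lam) ∧ Set.Iio lam ∈ U ∧ ∅ ∉ U ∧
  (∀ A ∈ U, ∀ B ∈ U, A ∩ B ∈ U) ∧
  (∀ A ∈ U, ∀ B, A ⊆ B → B ⊆ Set.Iio lam → B ∈ U)

/-- The diagonal intersection of a `lam`-sequence of sets. -/
def diagInter (lam : Ordinal.{u}) (A : Ordinal.{u} → Set Ordinal.{u}) : Set Ordinal.{u} :=
  {δ | δ < lam ∧ ∀ i < δ, δ ∈ A i}

/-- `U` is a normal filter on `lam`. -/
def NormalFilterOn (lam : Ordinal.{u}) (U : Set (Set Ordinal.{u})) : Prop :=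
  FilterOn lam U ∧
    ∀ A : Ordinal.{u} → Set Ordinal.{u}, (∀ i < lam, A i ∈ U) → diagInter lam A ∈ U

/-- A condition in the forcing notion `Q²_𝒰`. -/
structure Q2U (lam : Ordinal.{u}) (U : Set (Set Ordinal.{u})) where
  w : Set Ordinal.{u}
  C : Set Ordinal.{u}
  c : Ordinal.{u} → Set Ordinal.{u} → Set Ordinal.{u}
  C_mem : C ∈ U
  seq : CextSeq lam C c
  w_sub : w ⊆ Set.Iio (sInf C)
  norm : ∀ α u, (α ∉ C ∨ ¬ u ⊆ Set.Iio α) → c α u = ∅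

/-- The order of `Q²_𝒰`. -/
def Q2Ule (lam : Ordinal.{u}) (U : Set (Set Ordinal.{u})) (p q : Q2U lam U) : Prop :=
  q.C ⊆ p.C ∧ q.w ∈ posPlus p.C p.c p.w (sInf q.C) ∧
  ∀ α₀ ∈ q.C, (q.C ∩ Set.Ioi α₀).Nonempty →
    ∀ u ∈ posPlus q.C q.c q.w α₀,
      q.c α₀ u ∈ pos p.C p.c u (nextC q.C α₀)

/-- `q` is the condition `p↾_α u` in `Q²_𝒰`. -/
def IsRestrictedCond2 (lam : Ordinal.{u}) (U : Set (Set Ordinal.{u})) (p : Q2U lam U)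
    (α : Ordinal.{u}) (u : Set Ordinal.{u}) (q : Q2U lam U) : Prop :=
  q.w = u ∧ q.C = p.C ∩ Set.Ici α ∧ q.c = restC (p.C ∩ Set.Ici α) p.c

end
/-
The witness is built along `C` by transfinite recursion, starting from `w` at
`a = firstAbove C w`: at each `γ ∈ C` above `a` the set built so far (a subset of `γ`) is
extended by `c γ`, and at limits the union is taken. Since every `c γ` end-extends its
argument, the stages cohere, so the stage at `β` is in `pos(w, 𝔠, β)`: it follows `𝔠` at
every point of `C` and adds nothing on the gaps `[α₀, next α₀)` above limits `α₀ ∉ C`.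
For `S`-closedness, a limit `ξ < β` of the witness lies in `w ∪ {min (C \ sup w)}` when
`ξ ≤ a`, is put in by `c ξ` itself when `ξ ∈ C`, and otherwise lies in a gap
`(μ, next μ)` of `C` where the witness agrees with `c μ (·)`, which is `S`-closed.
-/

theorem ExtFun.subset {α β : Ordinal} {f : Set Ordinal → Set Ordinal} (hf : ExtFun α β f)
    {u : Set Ordinal} (hu : u ⊆ Set.Iio α) : u ⊆ f u := fun _ hx =>
  ((hf u hu).2.2.symm.subset hx).1

section Order

variable {C w : Set Ordinal} {α γ : Ordinal}

theorem nextC_spec (h : (C ∩ Set.Ioi α).Nonempty) : nextC C α ∈ C ∧ α < nextC C α :=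
  csInf_mem h

theorem nextC_le (hγ : γ ∈ C) (h : α < γ) : nextC C α ≤ γ :=
  csInf_le' ⟨hγ, h⟩

theorem firstAbove_spec (h : ∃ α ∈ C, w ⊆ Set.Iio α) :
    firstAbove C w ∈ C ∧ w ⊆ Set.Iio (firstAbove C w) :=
  csInf_mem h

theorem firstAbove_le (hα : α ∈ C) (hw : w ⊆ Set.Iio α) : firstAbove C w ≤ α :=
  csInf_le' ⟨hα, hw⟩

theorem minAboveSup_spec (h : ∃ α ∈ C, sSup w ≤ α) :
    minAboveSup C w ∈ C ∧ sSup w ≤ minAboveSup C w := by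
  obtain ⟨α, hα, hwα⟩ := h
  have hmem := csInf_mem (s := C \ Set.Iio (sSup w)) ⟨α, hα, not_lt.2 hwα⟩
  exact ⟨hmem.1, not_lt.1 hmem.2⟩

theorem mem_or_firstAbove_le (hw : BddAbove w) (hα : α ∈ C) (hwα : sSup w ≤ α) :
    α ∈ w ∨ firstAbove C w ≤ α :=
  or_iff_not_imp_left.2 fun hαw => firstAbove_le hα fun _ hx =>
    ((le_csSup hw hx).trans hwα).lt_of_ne fun h => hαw (h ▸ hx)

theorem eq_sSup_inter_Iio_of_subset {A B : Set Ordinal} {ξ : Ordinal} (hAB : A ⊆ B)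
    (hne : (A ∩ Set.Iio ξ).Nonempty) (hξ : ξ = sSup (A ∩ Set.Iio ξ)) :
    ξ = sSup (B ∩ Set.Iio ξ) :=
  le_antisymm
    (hξ.le.trans (csSup_le_csSup ⟨ξ, fun _ h => h.2.le⟩ hne (inter_subset_inter_left _ hAB)))
    (csSup_le' fun _ h => h.2.le)

theorem IsClubIn.exists_lt_lt_nextC {lam ξ : Ordinal} (hC : IsClubIn lam C) (hξ : ξ < lam)
    (hξC : ξ ∉ C) (hbelow : (C ∩ Set.Iio ξ).Nonempty) (habove : (C ∩ Set.Ioi ξ).Nonempty) :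
    ∃ μ ∈ C, μ < ξ ∧ ξ < nextC C μ := by
  have hbdd : BddAbove (C ∩ Set.Iio ξ) := ⟨ξ, fun _ h => h.2.le⟩
  set μ := sSup (C ∩ Set.Iio ξ)
  have hμξ : μ < ξ := (csSup_le' fun _ h => h.2.le).lt_of_ne
    fun h => hξC (hC.2 ξ hξ hbelow h.symm)
  have hμC : μ ∈ C := by
    by_contra hμC
    have hsame : C ∩ Set.Iio μ = C ∩ Set.Iio ξ := by
      ext γ
      refine ⟨fun h => ⟨h.1, h.2.trans hμξ⟩, fun h => ⟨h.1, ?_⟩⟩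
      exact (le_csSup hbdd h).lt_of_ne fun hγμ => hμC (hγμ ▸ h.1 : sSup (C ∩ Set.Iio ξ) ∈ C)
    exact hμC (hC.2 μ (hμξ.trans hξ) (hsame ▸ hbelow) (by rw [hsame]))
  obtain ⟨ν, hνC, hξν⟩ := habove
  obtain ⟨hnextC, hμnext⟩ := nextC_spec ⟨ν, hνC, hμξ.trans hξν⟩
  refine ⟨μ, hμC, hμξ, lt_of_not_ge fun hle => ?_⟩
  have hlt : nextC C μ < ξ := hle.lt_of_ne fun h => hξC (h ▸ hnextC)
  exact (le_csSup hbdd ⟨hnextC, hlt⟩).not_gt hμnext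

theorem sClosed_union_singleton {S u : Set Ordinal} {β : Ordinal} (hu : u ⊆ Set.Iio β)
    (h : ∀ ξ < β, (u ∩ Set.Iio ξ).Nonempty → ξ = sSup (u ∩ Set.Iio ξ) → ξ ∈ S → ξ ∈ u) :
    SClosed S (u ∪ {β}) := by
  intro ξ hne hsup hξS
  have hξβ : ξ ≤ β := hsup ▸ csSup_le' (by
    rintro x ⟨hx | rfl, -⟩
    exacts [(hu hx).le, le_rfl])
  rcases hξβ.eq_or_lt with rfl | hξβ
  · exact Or.inr rfl
  have hsame : (u ∪ {β}) ∩ Set.Iio ξ = u ∩ Set.Iio ξ := by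
    rw [union_inter_distrib_right, union_eq_left]
    rintro x ⟨rfl, hx⟩
    exact absurd hx (not_lt.2 hξβ.le)
  rw [hsame] at hne hsup
  exact Or.inl (h ξ hξβ hne hsup hξS)

end Order

def extChain (C : Set Ordinal) (c : Ordinal → Set Ordinal → Set Ordinal) (w : Set Ordinal)
    (a δ : Ordinal) : Set Ordinal :=
  w ∪ ⋃ γ ∈ C ∩ Set.Ico a δ, c γ (extChain C c w a γ)
termination_by δ
decreasing_by exact ‹γ ∈ C ∩ Set.Ico a δ›.2.2

section ExtChain

variable {C : Set Ordinal} {c : Ordinal → Set Ordinal → Set Ordinal} {w : Set Ordinal}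
  {a : Ordinal}

theorem mem_extChain {δ x : Ordinal} :
    x ∈ extChain C c w a δ ↔
      x ∈ w ∨ ∃ γ ∈ C ∩ Set.Ico a δ, x ∈ c γ (extChain C c w a γ) := by
  rw [extChain]
  simp only [mem_union, mem_iUnion, exists_prop]

theorem subset_extChain (δ : Ordinal) : w ⊆ extChain C c w a δ :=
  fun _ hx => mem_extChain.2 (Or.inl hx)

theorem apply_extChain_subset {γ δ : Ordinal} (hγ : γ ∈ C) (haγ : a ≤ γ) (hγδ : γ < δ) :
    c γ (extChain C c w a γ) ⊆ extChain C c w a δ :=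
  fun _ hx => mem_extChain.2 (Or.inr ⟨γ, ⟨hγ, haγ, hγδ⟩, hx⟩)

theorem extChain_self : extChain C c w a a = w := by
  ext x
  refine ⟨fun hx => ?_, fun hx => subset_extChain a hx⟩
  rcases mem_extChain.1 hx with hx | ⟨γ, ⟨-, haγ, hγa⟩, -⟩
  exacts [hx, absurd hγa (not_lt.2 haγ)]

theorem extChain_eq_of_forall_lt {δ δ' : Ordinal} (hδδ' : δ ≤ δ')
    (hgap : ∀ γ ∈ C, γ < δ' → γ < δ) : extChain C c w a δ' = extChain C c w a δ := by
  ext x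
  simp only [mem_extChain]
  refine or_congr_right ⟨?_, ?_⟩
  · rintro ⟨γ, ⟨hγ, haγ, hγδ'⟩, hx⟩
    exact ⟨γ, ⟨hγ, haγ, hgap γ hγ hγδ'⟩, hx⟩
  · rintro ⟨γ, ⟨hγ, haγ, hγδ⟩, hx⟩
    exact ⟨γ, ⟨hγ, haγ, hγδ.trans_le hδδ'⟩, hx⟩

variable (hext : ∀ α ∈ C, ExtFun α (nextC C α) (c α)) (hw : w ⊆ Set.Iio a)
include hext hw

theorem extChain_subset_Iio {δ : Ordinal} (hwδ : w ⊆ Set.Iio δ)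
    (hδ : ∀ γ ∈ C, γ < δ → nextC C γ ≤ δ) : extChain C c w a δ ⊆ Set.Iio δ := by
  induction δ using WellFoundedLT.induction with
  | _ δ ih =>
    intro x hx
    rcases mem_extChain.1 hx with hx | ⟨γ, ⟨hγ, haγ, hγδ⟩, hx⟩
    · exact hwδ hx
    have hγ_sub := ih γ hγδ (fun _ hy => (hw hy).trans_le haγ) fun _ _ h => nextC_le hγ h
    exact ((hext γ hγ _ hγ_sub).1 hx).trans_le (hδ γ hγ hγδ)

theorem extChain_subset_Iio_of_mem {α : Ordinal} (hα : α ∈ C) (haα : a ≤ α) :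
    extChain C c w a α ⊆ Set.Iio α :=
  extChain_subset_Iio hext hw (fun _ hy => (hw hy).trans_le haα) fun _ _ h => nextC_le hα h

theorem extChain_inter_Iio {α δ : Ordinal} (hα : α ∈ C) (haα : a ≤ α) (hαδ : α ≤ δ) :
    extChain C c w a δ ∩ Set.Iio α = extChain C c w a α := by
  induction δ using WellFoundedLT.induction with
  | _ δ ih =>
    refine Subset.antisymm ?_ fun x hx => ⟨?_, extChain_subset_Iio_of_mem hext hw hα haα hx⟩
    · rintro x ⟨hx, hxα⟩
      rcases mem_extChain.1 hx with hx | ⟨γ, ⟨hγ, haγ, hγδ⟩, hx⟩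
      · exact subset_extChain α hx
      rcases lt_or_ge γ α with hγα | hαγ
      · exact apply_extChain_subset hγ haγ hγα hx
      have hxγ : x ∈ extChain C c w a γ := by
        rw [← (hext γ hγ _ (extChain_subset_Iio_of_mem hext hw hγ haγ)).2.2]
        exact ⟨hx, hxα.trans_le hαγ⟩
      exact ih γ hγδ hαγ ▸ ⟨hxγ, hxα⟩
    · rcases mem_extChain.1 hx with hx | ⟨γ, ⟨hγ, haγ, hγα⟩, hx⟩
      · exact subset_extChain δ hx
      · exact apply_extChain_subset hγ haγ (hγα.trans_le hαδ) hx

theorem extChain_nextC {α : Ordinal} (hα : α ∈ C) (haα : a ≤ α)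
    (hne : (C ∩ Set.Ioi α).Nonempty) :
    extChain C c w a (nextC C α) = c α (extChain C c w a α) := by
  have hsub := (hext α hα).subset (extChain_subset_Iio_of_mem hext hw hα haα)
  refine Subset.antisymm (fun x hx => ?_) (apply_extChain_subset hα haα (nextC_spec hne).2)
  rcases mem_extChain.1 hx with hxw | ⟨γ, ⟨hγ, haγ, hγν⟩, hxc⟩
  · exact hsub (subset_extChain α hxw)
  rcases lt_trichotomy γ α with hγα | rfl | hαγ
  · exact hsub (apply_extChain_subset hγ haγ hγα hxc)
  · exact hxc
  · exact absurd (nextC_le hγ hαγ) (not_le.2 hγν)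

theorem mem_extChain_of_mem (hdiag : ∀ α ∈ C, ∀ u, u ⊆ Set.Iio α → α ∈ c α u) {γ δ : Ordinal}
    (hγ : γ ∈ C) (haγ : a ≤ γ) (hγδ : γ < δ) : γ ∈ extChain C c w a δ :=
  apply_extChain_subset hγ haγ hγδ
    (hdiag γ hγ _ (extChain_subset_Iio_of_mem hext hw hγ haγ))

theorem extChain_inter_Iio_nextC_of_not_mem {α₀ β : Ordinal} (hα₀C : α₀ ∉ C)
    (hbelow : (C ∩ Set.Iio α₀).Nonempty) (hlim : α₀ = sSup (C ∩ Set.Iio α₀))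
    (habove : (C ∩ Set.Ioi α₀).Nonempty) (hwα₀ : w ⊆ Set.Iio α₀) (haν : a ≤ nextC C α₀)
    (hνβ : nextC C α₀ ≤ β) :
    extChain C c w a β ∩ Set.Iio (nextC C α₀) = extChain C c w a β ∩ Set.Iio α₀ := by
  obtain ⟨hνC, hα₀ν⟩ := nextC_spec habove
  have hgap : ∀ γ ∈ C, γ < nextC C α₀ → γ < α₀ := fun γ hγ hγν =>
    (lt_or_gt_of_ne (ne_of_mem_of_not_mem hγ hα₀C)).resolve_right
      fun h => (nextC_le hγ h).not_gt hγν
  have hlimit : ∀ γ ∈ C, γ < α₀ → nextC C γ ≤ α₀ := fun γ hγ hγα₀ => by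
    obtain ⟨δ, hδ, hγδ⟩ := exists_lt_of_lt_csSup hbelow (hlim ▸ hγα₀)
    exact (nextC_le hδ.1 hγδ).trans hδ.2.le
  have hsub : extChain C c w a β ∩ Set.Iio (nextC C α₀) ⊆ Set.Iio α₀ := by
    rw [extChain_inter_Iio hext hw hνC haν hνβ, extChain_eq_of_forall_lt hα₀ν.le hgap]
    exact extChain_subset_Iio hext hw hwα₀ hlimit
  exact Subset.antisymm (subset_inter inter_subset_left hsub)
    (inter_subset_inter_right _ (Iio_subset_Iio hα₀ν.le))

end ExtChain

section Witness

variable {lam : Ordinal} {S C : Set Ordinal} {c : Ordinal → Set Ordinal → Set Ordinal}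
  {w : Set Ordinal} {β : Ordinal}

theorem extChain_mem_pos (hCc : CextSeq lam C c) (hβ : β ∈ C) (hw : w ⊆ Set.Iio β) :
    extChain C c w (firstAbove C w) β ∈ pos C c w β := by
  obtain ⟨⟨hClam, hCunb⟩, hext⟩ := hCc
  set a := firstAbove C w
  obtain ⟨haC, hwa⟩ : a ∈ C ∧ w ⊆ Set.Iio a := firstAbove_spec ⟨β, hβ, hw⟩
  have haβ : a ≤ β := firstAbove_le hβ hw
  have hrestr {α : Ordinal} (hα : α ∈ C) (haα : a ≤ α) (hαβ : α ≤ β) :=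
    extChain_inter_Iio hext hwa hα haα hαβ
  have hstep {α : Ordinal} (hα : α ∈ C) (haα : a ≤ α) (hne : (C ∩ Set.Ioi α).Nonempty) :=
    extChain_nextC hext hwa hα haα hne
  refine ⟨⟨extChain_subset_Iio_of_mem hext hwa hβ haβ, (hrestr haC le_rfl haβ).trans
    extChain_self, fun α₀ hα₀ hwα₀ hne hνβ => ?_, fun α₀ hwα₀ hα₀C hbelow hlim hne hνβ => ?_⟩,
    fun _ hνβ => ?_⟩
  · have haα₀ : a ≤ α₀ := firstAbove_le hα₀ hwα₀
    obtain ⟨hνC, hα₀ν⟩ := nextC_spec hne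
    left
    rw [hrestr hα₀ haα₀ (hα₀ν.le.trans hνβ), hrestr hνC (haα₀.trans hα₀ν.le) hνβ,
      hstep hα₀ haα₀ hne]
  · have hwα₀ : w ⊆ Set.Iio α₀ := fun x hx =>
      (le_csSup ⟨β, fun y hy => (hw hy).le⟩ hx).trans_lt hwα₀
    obtain ⟨hνC, hα₀ν⟩ := nextC_spec hne
    exact extChain_inter_Iio_nextC_of_not_mem hext hwa hα₀C hbelow hlim hne hwα₀
      (firstAbove_le hνC fun x hx => (hwα₀ hx).trans hα₀ν) hνβ
  · have hne : (C ∩ Set.Ioi a).Nonempty := hCunb a (hClam haC)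
    obtain ⟨hνC, haν⟩ := nextC_spec hne
    rw [hrestr hνC haν.le hνβ, hstep haC le_rfl hne, extChain_self]

theorem mem_extChain_of_not_mem (hC : IsClubIn lam C)
    (hext : ∀ α ∈ C, ExtFun α (nextC C α) (c α))
    (hSc : ∀ ξ ∈ S, ξ ∉ C → ∀ α ∈ C ∩ Set.Iio ξ, ∀ u, u ⊆ Set.Iio α →
      ξ = sSup (c α u ∩ Set.Iio ξ) → ξ ∈ c α u)
    {a ξ : Ordinal} (hw : w ⊆ Set.Iio a) (ha : a ∈ C) (hβ : β ∈ C) (haξ : a < ξ) (hξβ : ξ < β)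
    (hξS : ξ ∈ S) (hξC : ξ ∉ C) (hlim : ξ = sSup (extChain C c w a β ∩ Set.Iio ξ)) :
    ξ ∈ extChain C c w a β := by
  obtain ⟨μ, hμ, hμξ, hξν⟩ :=
    hC.exists_lt_lt_nextC (hξβ.trans (hC.1.1 hβ)) hξC ⟨a, ha, haξ⟩ ⟨β, hβ, hξβ⟩
  have haμ : a ≤ μ := not_lt.1 fun hμa => ((nextC_le ha hμa).trans_lt haξ).not_gt hξν
  have hne : (C ∩ Set.Ioi μ).Nonempty := ⟨β, hβ, hμξ.trans hξβ⟩
  obtain ⟨hνC, hμν⟩ := nextC_spec hne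
  have hstep : extChain C c w a β ∩ Set.Iio (nextC C μ) = c μ (extChain C c w a μ) := by
    rw [extChain_inter_Iio hext hw hνC (haμ.trans hμν.le) (nextC_le hβ (hμξ.trans hξβ)),
      extChain_nextC hext hw hμ haμ hne]
  have hsame : c μ (extChain C c w a μ) ∩ Set.Iio ξ = extChain C c w a β ∩ Set.Iio ξ := by
    rw [← hstep, inter_assoc, Iio_inter_Iio, min_eq_right hξν.le]
  exact apply_extChain_subset hμ haμ (hμξ.trans hξβ) <| hSc ξ hξS hξC μ ⟨hμ, hμξ⟩ _
    (extChain_subset_Iio_of_mem hext hw hμ haμ) (hsame ▸ hlim)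

theorem sClosed_extChain_union (hc : SClosedSeq lam S C c) (hβ : β ∈ C) (hw : w ⊆ Set.Iio β)
    (hwcl : SClosed S (w ∪ {minAboveSup C w})) :
    SClosed S (extChain C c w (firstAbove C w) β ∪ {β}) := by
  obtain ⟨hC, ⟨-, hext⟩, hdiag, hSc⟩ := hc
  set a := firstAbove C w
  obtain ⟨haC, hwa⟩ : a ∈ C ∧ w ⊆ Set.Iio a := firstAbove_spec ⟨β, hβ, hw⟩
  have haβ : a ≤ β := firstAbove_le hβ hw
  have hmem {ζ : Ordinal} (hζ : ζ ∈ C) (haζ : a ≤ ζ) (hζβ : ζ < β) :=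
    mem_extChain_of_mem hext hwa hdiag (w := w) hζ haζ hζβ
  refine sClosed_union_singleton (extChain_subset_Iio_of_mem hext hwa hβ haβ)
    fun ξ hξβ hne hlim hξS => ?_
  rcases le_or_gt ξ a with hξa | haξ
  · have hsame : extChain C c w a β ∩ Set.Iio ξ = w ∩ Set.Iio ξ := calc
        _ = (extChain C c w a β ∩ Set.Iio a) ∩ Set.Iio ξ := by
          rw [inter_assoc, Iio_inter_Iio, min_eq_right hξa]
        _ = w ∩ Set.Iio ξ := by
          rw [extChain_inter_Iio hext hwa haC le_rfl haβ, extChain_self]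
    rw [hsame] at hne hlim
    rcases hwcl ξ (hne.mono (inter_subset_inter_left _ subset_union_left))
      (eq_sSup_inter_Iio_of_subset subset_union_left hne hlim) hξS with hξw | rfl
    · exact subset_extChain β hξw
    obtain ⟨hmC, hwm⟩ := minAboveSup_spec ⟨β, hβ, csSup_le' fun _ hx => (hw hx).le⟩
    rcases mem_or_firstAbove_le ⟨β, fun _ hx => (hw hx).le⟩ hmC hwm with hmw | ham
    · exact subset_extChain β hmw
    · exact hmem hmC ham hξβ
  by_cases hξC : ξ ∈ C
  · exact hmem hξC haξ.le hξβ
  · exact mem_extChain_of_not_mem hC hext hSc hwa haC hβ haξ hξβ hξS hξC hlim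

end Witness

theorem posS_nonempty_subset_posPlusS_general (κ : Cardinal.{0})
    (S : Set Ordinal)
    (C : Set Ordinal) (c : Ordinal → Set Ordinal → Set Ordinal)
    (hc : SClosedSeq κ.ord S C c)
    (β : Ordinal) (hβ : β ∈ C)
    (w : Set Ordinal) (hw : w ⊆ Set.Iio β)
    (hwcl : SClosed S (w ∪ {minAboveSup C w})) :
    (posS S C c w β).Nonempty ∧ posS S C c w β ⊆ posPlusS S C c w β :=
  ⟨⟨_, extChain_mem_pos hc.2.1 hβ hw, sClosed_extChain_union hc hβ hw hwcl⟩,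
    fun _ hu => ⟨hu.1.1, hu.2⟩⟩

/-- `pos_S(w, 𝔠, β)` is nonempty and contained in `pos⁺_S(w, 𝔠, β)`. -/
theorem posS_nonempty_subset_posPlusS (κ : Cardinal.{0}) (hκ : κ.IsInaccessible)
    (S : Set Ordinal)
    (C : Set Ordinal) (c : Ordinal → Set Ordinal → Set Ordinal)
    (hc : SClosedSeq κ.ord S C c)
    (β : Ordinal) (hβ : β ∈ C)
    (w : Set Ordinal) (hw : w ⊆ Set.Iio β)
    (hwcl : SClosed S (w ∪ {minAboveSup C w})) :
    (posS S C c w β).Nonempty ∧ posS S C c w β ⊆ posPlusS S C c w β :=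
  posS_nonempty_subset_posPlusS_general κ S C c hc β hβ w hw hwcl
end

section
/- If p ∈ Q¹_S and α ∈ C^p, then the family {p↾_α u : u ∈ pos⁺_S(w^p, 𝔠^p, α)} is pre-dense above p in Q¹_S, i.e., every q ≥ p is compatible with some p↾_α u. -/
open Set

/-!
Given `r ≥ p`, pick `β ∈ C^r` above `α` and let `T` be the generic set that `r` decides below `β`:
`w^r` extended along `C^r` by the functions of `𝔠^r`. Then `u = T ∩ α` lies in
`pos⁺_S(w^p, 𝔠^p, α)`, and `r↾_β T` extends both `r` and `p↾_α u`. Its extension clauses over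
`p↾_α u` are inherited from those of `p ≤ r`: the pos-condition of `p ≤ r` forbids a possibility
of `r` at a point `a` of `C^r` to be bounded below `a` by a point of `C^p`, so for both conditions
the relevant first point of the club is `a` itself.
-/

section

variable {lam : Ordinal} {S C : Set Ordinal} {c : Ordinal → Set Ordinal → Set Ordinal}
  {w x y : Set Ordinal} {a b β : Ordinal}

lemma nextC_mem (h : (C ∩ Ioi a).Nonempty) : nextC C a ∈ C ∧ a < nextC C a :=
  csInf_mem h

lemma nextC_le_s11 (hb : b ∈ C) (hab : a < b) : nextC C a ≤ b :=
  csInf_le' ⟨hb, hab⟩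

lemma nextC_inter_Ici (h : b ≤ a) : nextC (C ∩ Ici b) a = nextC C a := by
  unfold nextC
  congr 1
  ext x
  exact ⟨fun hx => ⟨hx.1.1, hx.2⟩, fun hx => ⟨⟨hx.1, h.trans hx.2.le⟩, hx.2⟩⟩

lemma csInf_inter_Ici (hb : b ∈ C) : sInf (C ∩ Ici b) = b :=
  le_antisymm (csInf_le' ⟨hb, self_mem_Ici⟩) (le_csInf ⟨b, hb, self_mem_Ici⟩ fun _ he => he.2)

lemma firstAbove_eq_of_forall_le (hb : b ∈ C) (hx : x ⊆ Iio b)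
    (hmin : ∀ a ∈ C, x ⊆ Iio a → b ≤ a) : firstAbove C x = b :=
  le_antisymm (csInf_le' ⟨hb, hx⟩) (le_csInf ⟨b, hb, hx⟩ fun a ha => hmin a ha.1 ha.2)

lemma firstAbove_inter_Ici (hb : b ∈ C) (hx : x ⊆ Iio b) : firstAbove (C ∩ Ici b) x = b :=
  firstAbove_eq_of_forall_le ⟨hb, self_mem_Ici⟩ hx fun _ h _ => h.2

lemma firstAbove_le_s11 (hb : b ∈ C) (hx : x ⊆ Iio b) : firstAbove C x ≤ b :=
  csInf_le' ⟨hb, hx⟩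

lemma inter_Iio_inter_Iio (h : b ≤ a) : x ∩ Iio a ∩ Iio b = x ∩ Iio b := by
  rw [inter_assoc, Iio_inter_Iio, min_eq_right h]

lemma union_singleton_inter_Iio (h : a ≤ b) : (x ∪ {b}) ∩ Iio a = x ∩ Iio a := by
  rw [union_inter_distrib_right, singleton_inter_eq_empty.mpr (notMem_Iio.mpr h), union_empty]

lemma restC_of_mem {D : Set Ordinal} (ha : a ∈ D) (hx : x ⊆ Iio a) : restC D c a x = c a x := by
  simp [restC, ha, hx]

lemma ExtFun.subset_apply {f : Set Ordinal → Set Ordinal} (h : ExtFun a b f) (hx : x ⊆ Iio a) :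
    x ⊆ f x := by
  intro y hy
  rw [← (h x hx).2.2] at hy
  exact hy.1

lemma sClosed_union_singleton_iff (hx : x ⊆ Iio b) :
    SClosed S (x ∪ {b}) ↔
      ∀ ξ < b, (x ∩ Iio ξ).Nonempty → ξ = sSup (x ∩ Iio ξ) → ξ ∈ S → ξ ∈ x := by
  constructor
  · intro h ξ hξ hne hsup hS
    rw [← union_singleton_inter_Iio hξ.le] at hne hsup
    exact (h ξ hne hsup hS).resolve_right hξ.ne
  · intro h ξ hne hsup hS
    rcases lt_trichotomy ξ b with hξ | rfl | hξ
    · rw [union_singleton_inter_Iio hξ.le] at hne hsup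
      exact Or.inl (h ξ hξ hne hsup hS)
    · exact Or.inr rfl
    · refine absurd (hsup ▸ csSup_le hne ?_) (not_le.mpr hξ)
      rintro y ⟨hy | rfl, -⟩
      exacts [(hx hy).le, le_rfl]

lemma sClosed_inter_Iio_union_singleton (hx : x ⊆ Iio b) (hcl : SClosed S (x ∪ {b}))
    (hab : a ≤ b) : SClosed S (x ∩ Iio a ∪ {a}) := by
  rw [sClosed_union_singleton_iff inter_subset_right]
  intro ξ hξ hne hsup hS
  rw [inter_Iio_inter_Iio hξ.le] at hne hsup
  exact ⟨(sClosed_union_singleton_iff hx).mp hcl ξ (hξ.trans_le hab) hne hsup hS, hξ⟩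

namespace IsClubIn

lemma mem_of_eq_sSup (hC : IsClubIn lam C) (hne : (C ∩ Iio a).Nonempty)
    (ha : a = sSup (C ∩ Iio a)) (hsucc : (C ∩ Ioi a).Nonempty) : a ∈ C := by
  obtain ⟨e, he, hae⟩ := hsucc
  exact hC.2 a (hae.trans (hC.1.1 he)) hne ha

lemma inter_Ici (hC : IsClubIn lam C) (hb : b ∈ C) : IsClubIn lam (C ∩ Ici b) := by
  refine ⟨⟨fun x hx => hC.1.1 hx.1, fun a ha => ?_⟩, fun ξ hξ hne hsup => ?_⟩
  · obtain ⟨e, he, hae⟩ := hC.1.2 (max a b) (max_lt ha (hC.1.1 hb))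
    exact ⟨e, ⟨he, (le_max_right a b).trans hae.le⟩, (le_max_left a b).trans_lt hae⟩
  · obtain ⟨e, ⟨he, hbe⟩, heξ⟩ := hne
    have hbdd : BddAbove (C ∩ Iio ξ) := ⟨ξ, fun _ hx => hx.2.le⟩
    have hsup' : ξ = sSup (C ∩ Iio ξ) := le_antisymm
      (hsup.le.trans (csSup_le_csSup hbdd ⟨e, ⟨he, hbe⟩, heξ⟩ fun x hx => ⟨hx.1.1, hx.2⟩))
      (csSup_le ⟨e, he, heξ⟩ fun _ hx => hx.2.le)
    exact ⟨hC.2 ξ hξ ⟨e, he, heξ⟩ hsup', mem_Ici.mpr (hbe.trans heξ.le)⟩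

lemma exists_le_lt_nextC (hC : IsClubIn lam C) (hb : b ∈ C) (hab : a < b)
    (hne : (C ∩ Iic a).Nonempty) :
    ∃ g ∈ C, g ≤ a ∧ (C ∩ Ioi g).Nonempty ∧ a < nextC C g ∧ nextC C g ≤ b := by
  have hbdd : BddAbove (C ∩ Iic a) := ⟨a, fun _ hx => hx.2⟩
  set g := sSup (C ∩ Iic a)
  have hga : g ≤ a := csSup_le hne fun _ hx => hx.2
  have hg : g ∈ C := by
    by_contra hg
    have hset : C ∩ Iio g = C ∩ Iic a := by
      ext x
      refine ⟨fun hx => ⟨hx.1, ?_⟩, fun hx => ⟨hx.1, ?_⟩⟩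
      · obtain ⟨y, hy, hxy⟩ := exists_lt_of_lt_csSup hne hx.2
        exact hxy.le.trans hy.2
      · exact (le_csSup hbdd hx).lt_of_ne fun h => hg (h ▸ hx.1 : sSup (C ∩ Iic a) ∈ C)
    exact hg (hC.2 g (hga.trans_lt (hab.trans (hC.1.1 hb))) (hset ▸ hne) (by rw [hset]))
  have hsucc : (C ∩ Ioi g).Nonempty := ⟨b, hb, hga.trans_lt hab⟩
  refine ⟨g, hg, hga, hsucc, ?_, nextC_le_s11 hb (hga.trans_lt hab)⟩
  by_contra! h
  exact (nextC_mem hsucc).2.not_ge (le_csSup hbdd ⟨(nextC_mem hsucc).1, h⟩)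

lemma mem_posPlus (hC : IsClubIn lam C) (hx : x ⊆ Iio β)
    (h2 : x ∩ Iio (firstAbove C w) = w)
    (h3 : ∀ α₀ ∈ C, w ⊆ Iio α₀ → (C ∩ Ioi α₀).Nonempty → nextC C α₀ ≤ β →
      (c α₀ (x ∩ Iio α₀) = x ∩ Iio (nextC C α₀) ∨ x ∩ Iio α₀ = x ∩ Iio (nextC C α₀))) :
    x ∈ posPlus C c w β :=
  ⟨hx, h2, h3, fun _ _ hnot hne hsup hsucc _ => absurd (hC.mem_of_eq_sSup hne hsup hsucc) hnot⟩

end IsClubIn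

/-- The generic set that the condition `(w, C, c)` decides below `β`. -/
def tower (C : Set Ordinal) (c : Ordinal → Set Ordinal → Set Ordinal) (w : Set Ordinal)
    (β : Ordinal) : Set Ordinal :=
  w ∪ ⋃ γ ∈ C ∩ Iio β, c γ (tower C c w γ)
termination_by β
decreasing_by exact mem_of_mem_inter_right (by assumption)

lemma tower_eq (β : Ordinal) : tower C c w β = w ∪ ⋃ γ ∈ C ∩ Iio β, c γ (tower C c w γ) := by
  rw [tower]

lemma subset_tower (β : Ordinal) : w ⊆ tower C c w β := by
  rw [tower_eq]
  exact subset_union_left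

lemma c_tower_subset_tower {γ : Ordinal} (hγ : γ ∈ C ∩ Iio β) :
    c γ (tower C c w γ) ⊆ tower C c w β := by
  rw [tower_eq β]
  exact subset_union_of_subset_right (subset_biUnion_of_mem (u := fun γ => c γ _) hγ) _

lemma tower_mono {β' : Ordinal} (h : β ≤ β') : tower C c w β ⊆ tower C c w β' := by
  rw [tower_eq β]
  refine union_subset (subset_tower β') (iUnion₂_subset fun γ hγ => ?_)
  exact c_tower_subset_tower ⟨hγ.1, hγ.2.trans_le h⟩

lemma tower_subset_Iio (hext : ∀ γ ∈ C, ExtFun γ (nextC C γ) (c γ)) (hw : w ⊆ Iio (sInf C))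
    (hβ : β ∈ C) : tower C c w β ⊆ Iio β := by
  induction β using WellFoundedLT.induction with
  | _ β IH =>
    rw [tower_eq]
    refine union_subset (hw.trans (Iio_subset_Iio (csInf_le' hβ))) (iUnion₂_subset ?_)
    rintro γ ⟨hγ, hγβ⟩
    exact ((hext γ hγ _ (IH γ hγβ hγ)).1).trans (Iio_subset_Iio (nextC_le_s11 hβ hγβ))

lemma tower_inter_Iio (hext : ∀ γ ∈ C, ExtFun γ (nextC C γ) (c γ)) (hw : w ⊆ Iio (sInf C))
    (hb : b ∈ C) (hbβ : b ≤ β) : tower C c w β ∩ Iio b = tower C c w b := by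
  induction β using WellFoundedLT.induction with
  | _ β IH =>
    refine Subset.antisymm ?_ fun x hx => ⟨tower_mono hbβ hx, tower_subset_Iio hext hw hb hx⟩
    rintro x ⟨hx, hxb⟩
    rw [tower_eq] at hx
    simp only [mem_union, mem_iUnion] at hx
    obtain hx | ⟨γ, ⟨hγ, hγβ⟩, hxγ⟩ := hx
    · exact subset_tower b hx
    rcases lt_or_ge γ b with hγb | hbγ
    · exact c_tower_subset_tower ⟨hγ, hγb⟩ hxγ
    · rw [← IH γ hγβ hbγ]
      refine ⟨?_, hxb⟩
      rw [← (hext γ hγ _ (tower_subset_Iio hext hw hγ)).2.2]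
      exact ⟨hxγ, hxb.trans_le hbγ⟩

lemma tower_csInf : tower C c w (sInf C) = w := by
  rw [tower_eq]
  have : C ∩ Iio (sInf C) = ∅ := eq_empty_of_forall_notMem fun x hx => hx.2.not_ge (csInf_le' hx.1)
  simp [this]

lemma tower_nextC (hext : ∀ γ ∈ C, ExtFun γ (nextC C γ) (c γ)) (hw : w ⊆ Iio (sInf C))
    {γ : Ordinal} (hγ : γ ∈ C) (hsucc : (C ∩ Ioi γ).Nonempty) :
    tower C c w (nextC C γ) = c γ (tower C c w γ) := by
  have hsub := (hext γ hγ).subset_apply (tower_subset_Iio hext hw hγ)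
  refine Subset.antisymm ?_ (c_tower_subset_tower ⟨hγ, (nextC_mem hsucc).2⟩)
  rw [tower_eq]
  refine union_subset ((subset_tower γ).trans hsub) (iUnion₂_subset ?_)
  rintro γ' ⟨hγ', hγ'n⟩
  rcases lt_trichotomy γ' γ with hlt | rfl | hgt
  · exact (c_tower_subset_tower ⟨hγ', hlt⟩).trans hsub
  · exact Subset.rfl
  · exact absurd (nextC_le_s11 hγ' hgt) (not_le.mpr hγ'n)

lemma inter_Iio_mem_posPlus (hx : x ∈ posPlus C c w β) (ha : firstAbove C w ≤ a) (haβ : a ≤ β) :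
    x ∩ Iio a ∈ posPlus C c w a := by
  obtain ⟨-, h2, h3, h4⟩ := hx
  refine ⟨inter_subset_right, by rwa [inter_Iio_inter_Iio ha], fun a₀ ha₀ hw hsucc hn => ?_,
    fun a₀ hw ha₀ hne hsup hsucc hn => ?_⟩
  · rw [inter_Iio_inter_Iio ((nextC_mem hsucc).2.le.trans hn), inter_Iio_inter_Iio hn]
    exact h3 a₀ ha₀ hw hsucc (hn.trans haβ)
  · rw [inter_Iio_inter_Iio ((nextC_mem hsucc).2.le.trans hn), inter_Iio_inter_Iio hn]
    exact h4 a₀ hw ha₀ hne hsup hsucc (hn.trans haβ)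

lemma inter_Iio_mem_posPlusS (hx : x ∈ posPlusS S C c w β) (ha : firstAbove C w ≤ a)
    (haβ : a ≤ β) : x ∩ Iio a ∈ posPlusS S C c w a :=
  ⟨inter_Iio_mem_posPlus hx.1 ha haβ, sClosed_inter_Iio_union_singleton hx.1.1 hx.2 haβ⟩

lemma mem_posPlus_restrict (hC : IsClubIn lam C) (ha : a ∈ C) (hw : w ⊆ Iio a)
    (hx : x ∈ posPlus C c w β) :
    x ∈ posPlus (C ∩ Ici a) (restC (C ∩ Ici a) c) (x ∩ Iio a) β := by
  obtain ⟨h1, -, h3, -⟩ := hx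
  refine (hC.inter_Ici ha).mem_posPlus h1 ?_ fun a₁ ha₁ _ hsucc hn => ?_
  · rw [firstAbove_inter_Ici ha inter_subset_right]
  · rw [nextC_inter_Ici ha₁.2] at hn ⊢
    rw [restC_of_mem ha₁ inter_subset_right]
    exact h3 a₁ ha₁.1 (hw.trans (Iio_subset_Iio ha₁.2)) (hsucc.mono fun e he => ⟨he.1.1, he.2⟩) hn

namespace Q1S

lemma w_subset_Iio (t : Q1S lam S) (ha : a ∈ t.C) : t.w ⊆ Iio a :=
  t.w_sub.trans (Iio_subset_Iio (csInf_le' ha))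

/-- The condition `t↾_d x = (x, C \ d, c ↾ (C \ d))`. -/
def restrict (t : Q1S lam S) {d : Ordinal} (hd : d ∈ t.C) (x : Set Ordinal) (hx : x ⊆ Iio d)
    (hcl : SClosed S (x ∪ {d})) : Q1S lam S where
  w := x
  C := t.C ∩ Ici d
  c := restC (t.C ∩ Ici d) t.c
  seq := by
    have hclub := t.seq.1.inter_Ici hd
    refine ⟨hclub, ⟨hclub.1, fun a ha u hu => ?_⟩, fun a ha u hu => ?_,
      fun ξ hS hξ a ha u hu hsup => ?_⟩
    · rw [nextC_inter_Ici ha.2, restC_of_mem ha hu]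
      exact t.seq.2.1.2 a ha.1 u hu
    · rw [restC_of_mem ha hu]
      exact t.seq.2.2.1 a ha.1 u hu
    · rw [restC_of_mem ha.1 hu] at hsup ⊢
      exact t.seq.2.2.2 ξ hS (fun h => hξ ⟨h, mem_Ici.mpr (ha.1.2.trans ha.2.le)⟩) a
        ⟨ha.1.1, ha.2⟩ u hu hsup
  w_sub := by rwa [csInf_inter_Ici hd]
  w_cl := by rwa [csInf_inter_Ici hd]
  norm a u h := if_neg fun h' => h.elim (· h'.1) (· h'.2)

lemma tower_mem_posPlusS (t : Q1S lam S) (hβ : β ∈ t.C) :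
    tower t.C t.c t.w β ∈ posPlusS S t.C t.c t.w β := by
  have hext := t.seq.2.1.2
  have hmin : sInf t.C ∈ t.C := csInf_mem ⟨β, hβ⟩
  have hTsub := tower_subset_Iio hext t.w_sub hβ
  have hTmin : tower t.C t.c t.w β ∩ Iio (sInf t.C) = t.w := by
    rw [tower_inter_Iio hext t.w_sub hmin (csInf_le' hβ), tower_csInf]
  refine ⟨t.seq.1.mem_posPlus hTsub ?_ fun a ha _ hsucc hn => ?_,
    (sClosed_union_singleton_iff hTsub).mpr fun ξ hξβ hne hsup hS => ?_⟩
  · rwa [firstAbove_eq_of_forall_le hmin t.w_sub fun a ha _ => csInf_le' ha]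
  · left
    rw [tower_inter_Iio hext t.w_sub ha ((nextC_mem hsucc).2.le.trans hn),
      tower_inter_Iio hext t.w_sub (nextC_mem hsucc).1 hn, tower_nextC hext t.w_sub ha hsucc]
  by_cases hξ : ξ ∈ t.C
  · exact c_tower_subset_tower ⟨hξ, hξβ⟩ (t.seq.2.2.1 ξ hξ _ (tower_subset_Iio hext t.w_sub hξ))
  rcases lt_or_ge ξ (sInf t.C) with hξmin | hminξ
  · rw [← inter_Iio_inter_Iio hξmin.le, hTmin] at hne hsup
    exact subset_tower β ((sClosed_union_singleton_iff t.w_sub).mp t.w_cl ξ hξmin hne hsup hS)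
  obtain ⟨g, hg, hgξ, hsucc, hξn, hnβ⟩ := t.seq.1.exists_le_lt_nextC hβ hξβ ⟨_, hmin, hminξ⟩
  rw [← inter_Iio_inter_Iio hξn.le, tower_inter_Iio hext t.w_sub (nextC_mem hsucc).1 hnβ,
    tower_nextC hext t.w_sub hg hsucc] at hne hsup
  have hgξ' : g < ξ := hgξ.lt_of_ne fun h => hξ (h ▸ hg)
  exact c_tower_subset_tower ⟨hg, hgξ'.trans hξβ⟩
    (t.seq.2.2.2 ξ hS hξ g ⟨hg, hgξ'⟩ _ (tower_subset_Iio hext t.w_sub hg) hsup)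

lemma sClosed_c_union_nextC (t : Q1S lam S) (ha : a ∈ t.C) (hsucc : (t.C ∩ Ioi a).Nonempty)
    (hx : x ⊆ Iio a) (hcl : SClosed S (x ∪ {a})) : SClosed S (t.c a x ∪ {nextC t.C a}) := by
  have hE := t.seq.2.1.2 a ha x hx
  rw [sClosed_union_singleton_iff hE.1]
  intro ξ hξ hne hsup hS
  rcases lt_trichotomy ξ a with hξa | rfl | haξ
  · rw [← inter_Iio_inter_Iio hξa.le, hE.2.2] at hne hsup
    exact (t.seq.2.1.2 a ha).subset_apply hx
      ((sClosed_union_singleton_iff hx).mp hcl ξ hξa hne hsup hS)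
  · exact t.seq.2.2.1 ξ ha x hx
  · exact t.seq.2.2.2 ξ hS (fun h => (nextC_le_s11 h haξ).not_gt hξ) a ⟨ha, haξ⟩ x hx hsup

lemma mem_posPlusS_of_restrict (t : Q1S lam S) (hβ : β ∈ t.C)
    (hx : x ∈ posPlusS S t.C t.c t.w β)
    (hy : y ∈ posPlusS S (t.C ∩ Ici β) (restC (t.C ∩ Ici β) t.c) x a) :
    y ∈ posPlusS S t.C t.c t.w a := by
  obtain ⟨⟨hy1, hy2, hy3, -⟩, hycl⟩ := hy
  obtain ⟨⟨hx1, hx2, hx3, -⟩, -⟩ := hx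
  have hyβ : y ∩ Iio β = x := by
    rwa [firstAbove_inter_Ici hβ hx1] at hy2
  refine ⟨t.seq.1.mem_posPlus hy1 ?_ fun a₁ ha₁ hw hsucc hn => ?_, hycl⟩
  · rw [← inter_Iio_inter_Iio (firstAbove_le_s11 hβ (t.w_subset_Iio hβ)), hyβ, hx2]
  rcases le_or_gt β a₁ with hβa₁ | ha₁β
  · have := hy3 a₁ ⟨ha₁, hβa₁⟩ (hx1.trans (Iio_subset_Iio hβa₁))
      (hsucc.mono fun e he => ⟨⟨he.1, hβa₁.trans he.2.le⟩, he.2⟩)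
      (by rwa [nextC_inter_Ici hβa₁])
    rwa [nextC_inter_Ici hβa₁,
      restC_of_mem (D := t.C ∩ Ici β) ⟨ha₁, hβa₁⟩ inter_subset_right] at this
  · have hnβ := nextC_le_s11 hβ ha₁β
    rw [← inter_Iio_inter_Iio ha₁β.le, ← inter_Iio_inter_Iio hnβ, hyβ]
    exact hx3 a₁ ha₁ hw hsucc hnβ

end Q1S

namespace Q1Sle

variable {p r : Q1S lam S}

/-- The pos-condition of `p ≤ r` at `a` puts `firstAbove p.C x` into `r.c a x`; below `a`
that set is just `x`, which lies below `firstAbove p.C x`. -/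
lemma le_of_subset_Iio (hpr : Q1Sle lam S p r) (ha : a ∈ r.C) (hsucc : (r.C ∩ Ioi a).Nonempty)
    (hx : x ∈ posPlusS S r.C r.c r.w a) {g : Ordinal} (hg : g ∈ p.C) (hxg : x ⊆ Iio g) :
    a ≤ g := by
  by_contra! hga
  set f := firstAbove p.C x
  have hf : f ∈ {b ∈ p.C | x ⊆ Iio b} := csInf_mem ⟨g, hg, hxg⟩
  have hfa : f < a := (firstAbove_le_s11 hg hxg).trans_lt hga
  have hna := (nextC_mem hsucc).2
  have hpos : r.c a x ∩ Iio (nextC p.C f) = p.c f x :=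
    (hpr.2.2 a ha hsucc x hx).1.2 (hfa.trans hna).le ((nextC_le_s11 (hpr.1 ha) hfa).trans hna.le)
  have hfc : f ∈ r.c a x ∩ Iio (nextC p.C f) := hpos ▸ p.seq.2.2.1 f hf.1 x hf.2
  have hfx : f ∈ r.c a x ∩ Iio a := ⟨hfc.1, hfa⟩
  rw [(r.seq.2.1.2 a ha x hx.1.1).2.2] at hfx
  exact lt_irrefl f (hf.2 hfx)

lemma firstAbove_eq (hpr : Q1Sle lam S p r) (ha : a ∈ r.C) (hsucc : (r.C ∩ Ioi a).Nonempty)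
    (hx : x ∈ posPlusS S r.C r.c r.w a) {D : Set Ordinal} (haD : a ∈ D) (hD : D ⊆ p.C) :
    firstAbove D x = a :=
  firstAbove_eq_of_forall_le haD hx.1.1 fun _ hg hxg => hpr.le_of_subset_Iio ha hsucc hx (hD hg) hxg

lemma c_mem_posS (hpr : Q1Sle lam S p r) (ha : a ∈ r.C) (hsucc : (r.C ∩ Ioi a).Nonempty)
    (hx : x ∈ posPlusS S r.C r.c r.w a) : r.c a x ∈ posS S r.C r.c x (nextC r.C a) := by
  have hE := r.seq.2.1.2 a ha x hx.1.1
  have hfa := hpr.firstAbove_eq ha hsucc hx ha hpr.1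
  have hfull : r.c a x ∩ Iio (nextC r.C a) = r.c a x := inter_eq_left.mpr hE.1
  refine ⟨⟨r.seq.1.mem_posPlus hE.1 (by rw [hfa, hE.2.2]) fun b hb hxb hbsucc hn => ?_,
    fun _ _ => by rw [hfa, hfull]⟩, r.sClosed_c_union_nextC ha hsucc hx.1.1 hx.2⟩
  obtain rfl | hab := (hpr.le_of_subset_Iio ha hsucc hx (hpr.1 hb) hxb).eq_or_lt
  · left
    rw [hE.2.2, hfull]
  · exact absurd (hn.trans (nextC_le_s11 hb hab)) (nextC_mem hbsucc).2.not_ge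

lemma c_mem_posS_restrict (hpr : Q1Sle lam S p r) {α : Ordinal} (hα : α ∈ p.C) (ha : a ∈ r.C)
    (hαa : α ≤ a) (hsucc : (r.C ∩ Ioi a).Nonempty) (hx : x ∈ posPlusS S r.C r.c r.w a) :
    r.c a x ∈ posS S (p.C ∩ Ici α) (restC (p.C ∩ Ici α) p.c) x (nextC r.C a) := by
  have hE := r.seq.2.1.2 a ha x hx.1.1
  have hps := hpr.2.2 a ha hsucc x hx
  have haD : a ∈ p.C ∩ Ici α := ⟨hpr.1 ha, hαa⟩
  have hfa := hpr.firstAbove_eq ha hsucc hx (hpr.1 ha) subset_rfl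
  have hfaD := hpr.firstAbove_eq ha hsucc hx haD inter_subset_left
  refine ⟨⟨(p.seq.1.inter_Ici hα).mem_posPlus hps.1.1.1 (by rw [hfaD, hE.2.2])
    fun b hb hxb hbsucc hn => ?_, ?_⟩, hps.2⟩
  · rw [nextC_inter_Ici hb.2] at hn ⊢
    rw [restC_of_mem hb inter_subset_right]
    exact hps.1.1.2.2.1 b hb.1 hxb (hbsucc.mono fun e he => ⟨he.1.1, he.2⟩) hn
  · simpa only [hfaD, hfa, nextC_inter_Ici hαa, restC_of_mem haD hx.1.1] using hps.1.2

lemma tower_mem_posPlusS (hpr : Q1Sle lam S p r) (hβ : β ∈ r.C) :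
    tower r.C r.c r.w β ∈ posPlusS S p.C p.c p.w β := by
  have hext := r.seq.2.1.2
  have hmin : sInf r.C ∈ r.C := csInf_mem ⟨β, hβ⟩
  have hT := r.tower_mem_posPlusS hβ
  have hTmin : tower r.C r.c r.w β ∩ Iio (sInf r.C) = r.w := by
    rw [tower_inter_Iio hext r.w_sub hmin (csInf_le' hβ), tower_csInf]
  obtain ⟨⟨-, hw2, hw3, -⟩, -⟩ := hpr.2.1
  refine ⟨p.seq.1.mem_posPlus hT.1.1 ?_ fun a ha hpa hsucc hn => ?_, hT.2⟩
  · rw [← inter_Iio_inter_Iio (firstAbove_le_s11 (hpr.1 hmin) (p.w_subset_Iio (hpr.1 hmin))), hTmin,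
      hw2]
  rcases lt_or_ge a (sInf r.C) with hamin | hmina
  · have hnmin := nextC_le_s11 (hpr.1 hmin) hamin
    rw [← inter_Iio_inter_Iio hamin.le, ← inter_Iio_inter_Iio hnmin, hTmin]
    exact hw3 a ha hpa hsucc hnmin
  -- below `nextC r.C g` the tower is `r.c g (tower g)`, so the clauses of `p ≤ r` at `g` apply
  obtain ⟨g, hg, hga, hgsucc, hag, hgβ⟩ :=
    r.seq.1.exists_le_lt_nextC hβ ((nextC_mem hsucc).2.trans_le hn) ⟨_, hmin, hmina⟩
  have hng : nextC p.C a ≤ nextC r.C g := nextC_le_s11 (hpr.1 (nextC_mem hgsucc).1) hag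
  rw [← inter_Iio_inter_Iio hag.le, ← inter_Iio_inter_Iio hng,
    tower_inter_Iio hext r.w_sub (nextC_mem hgsucc).1 hgβ, tower_nextC hext r.w_sub hg hgsucc]
  exact (hpr.2.2 g hg hgsucc _ (r.tower_mem_posPlusS hg)).1.1.2.2.1 a ha
    ((tower_subset_Iio hext r.w_sub hg).trans (Iio_subset_Iio hga)) hsucc hng

lemma le_restrict (hpr : Q1Sle lam S p r) (hβ : β ∈ r.C) (hx : x ∈ posPlusS S r.C r.c r.w β) :
    Q1Sle lam S r (r.restrict hβ x hx.1.1 hx.2) := by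
  refine ⟨inter_subset_left, ?_, fun a ha hsucc y hy => ?_⟩
  · show x ∈ posPlusS S r.C r.c r.w (sInf (r.C ∩ Ici β))
    rwa [csInf_inter_Ici hβ]
  · show restC (r.C ∩ Ici β) r.c a y ∈ posS S r.C r.c y (nextC (r.C ∩ Ici β) a)
    rw [nextC_inter_Ici ha.2, restC_of_mem (D := r.C ∩ Ici β) ha hy.1.1]
    exact hpr.c_mem_posS ha.1 (hsucc.mono fun e he => ⟨he.1.1, he.2⟩)
      (r.mem_posPlusS_of_restrict hβ hx hy)

lemma restrict_le_restrict (hpr : Q1Sle lam S p r) {α : Ordinal} (hα : α ∈ p.C) (hβ : β ∈ r.C)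
    (hαβ : α ≤ β) (hx : x ∈ posPlusS S r.C r.c r.w β) (hxp : x ∈ posPlusS S p.C p.c p.w β)
    {u : Set Ordinal} (hxu : x ∩ Iio α = u) (hu : u ⊆ Iio α) (hucl : SClosed S (u ∪ {α})) :
    Q1Sle lam S (p.restrict hα u hu hucl) (r.restrict hβ x hx.1.1 hx.2) := by
  subst hxu
  refine ⟨fun y hy => ⟨hpr.1 hy.1, hαβ.trans hy.2⟩, ?_, fun a ha hsucc y hy => ?_⟩
  · show x ∈ posPlusS S (p.C ∩ Ici α) (restC (p.C ∩ Ici α) p.c) (x ∩ Iio α)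
      (sInf (r.C ∩ Ici β))
    rw [csInf_inter_Ici hβ]
    exact ⟨mem_posPlus_restrict p.seq.1 hα (p.w_subset_Iio hα) hxp.1, hxp.2⟩
  · show restC (r.C ∩ Ici β) r.c a y ∈
      posS S (p.C ∩ Ici α) (restC (p.C ∩ Ici α) p.c) y (nextC (r.C ∩ Ici β) a)
    rw [nextC_inter_Ici ha.2, restC_of_mem (D := r.C ∩ Ici β) ha hy.1.1]
    exact hpr.c_mem_posS_restrict hα ha.1 (hαβ.trans ha.2)
      (hsucc.mono fun e he => ⟨he.1.1, he.2⟩) (r.mem_posPlusS_of_restrict hβ hx hy)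

end Q1Sle

end

theorem Q1S_restrict_predense_general (κ : Cardinal.{0}) (S : Set Ordinal)
    (p : Q1S κ.ord S) (α : Ordinal) (hα : α ∈ p.C) :
    ∀ r : Q1S κ.ord S, Q1Sle κ.ord S p r →
      ∃ u ∈ posPlusS S p.C p.c p.w α, ∃ q : Q1S κ.ord S,
        IsRestrictedCond κ.ord S p α u q ∧
        ∃ s : Q1S κ.ord S, Q1Sle κ.ord S q s ∧ Q1Sle κ.ord S r s := by
  intro r hpr
  obtain ⟨β, hβ, hαβ⟩ := r.seq.1.1.2 α (p.seq.1.1.1 hα)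
  set T := tower r.C r.c r.w β
  have hT : T ∈ posPlusS S r.C r.c r.w β := r.tower_mem_posPlusS hβ
  have hTp : T ∈ posPlusS S p.C p.c p.w β := hpr.tower_mem_posPlusS hβ
  have hu : T ∩ Iio α ∈ posPlusS S p.C p.c p.w α :=
    inter_Iio_mem_posPlusS hTp (firstAbove_le_s11 hα (p.w_subset_Iio hα)) hαβ.le
  exact ⟨T ∩ Iio α, hu, p.restrict hα _ hu.1.1 hu.2, ⟨rfl, rfl, rfl⟩,
    r.restrict hβ T hT.1.1 hT.2, hpr.restrict_le_restrict hα hβ hαβ.le hT hTp rfl _ _,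
    hpr.le_restrict hβ hT⟩

/-- the family `{p↾_α u : u ∈ pos⁺_S(w^p, 𝔠^p, α)}` is pre-dense above `p`. -/
theorem Q1S_restrict_predense (κ : Cardinal.{0}) (hκ : κ.IsInaccessible) (S : Set Ordinal)
    (hS : StatIn κ.ord S) (hS' : StatIn κ.ord (Set.Iio κ.ord \ S))
    (p : Q1S κ.ord S) (α : Ordinal) (hα : α ∈ p.C) :
    ∀ r : Q1S κ.ord S, Q1Sle κ.ord S p r →
      ∃ u ∈ posPlusS S p.C p.c p.w α, ∃ q : Q1S κ.ord S,
        IsRestrictedCond κ.ord S p α u q ∧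
        ∃ s : Q1S κ.ord S, Q1Sle κ.ord S q s ∧ Q1Sle κ.ord S r s :=
  Q1S_restrict_predense_general κ S p α hα
end
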